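/- Let R be a consistent Riordan array, i.e., the Riordan array determined by a nonnegative A-sequence (a_n) and Z-sequence (z_n) with z_n = a_n for all n. If (a_n) is a Pólya frequency (PF) sequence, then R is totally positive (TP). -/

import Mathlib

/-- An infinite real matrix `M` is totally positive (TP) if every minor
(determinant of a square submatrix with rows and columns chosen in
increasing order) is nonnegative. -/
def IsTP (M : ℕ → ℕ → ℝ) : Prop :=
  ∀ k : ℕ, ∀ rows cols : Fin k → ℕ, StrictMono rows → StrictMono cols →
    0 ≤ (Matrix.of fun i j => M (rows i) (cols j)).det

/-- The Toeplitz matrix `[a_{i-j}]` of a sequence `a` (with `a m = 0` for `m < 0`). -/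
def toeplitz (a : ℕ → ℝ) : ℕ → ℕ → ℝ := fun i j => if j ≤ i then a (i - j) else 0

/-- A nonnegative sequence is a Pólya frequency (PF) sequence
if its Toeplitz matrix is TP. -/
def IsPF (a : ℕ → ℝ) : Prop := IsTP (toeplitz a)

/-!
Deleting the first row of `R` leaves `R * P`, where `P` is the production matrix of `R`:
`P j 0 = z j` and `P j (k + 1) = a (j - k)`. When `z = a`, the matrix `P` is the Toeplitz matrix
of `a` without its first row and with its first column doubled, so it is TP when `a` is PF.
Since the first row of `R` is `(1, 0, 0, …)`, Cauchy–Binet carries total positivity from the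
first `N` rows of `R` to the first `N + 1` rows.
-/

open Finset Equiv

theorem Finset.sum_injective_eq_sum_strictMono_sum_perm {β : Type*} [AddCommMonoid β] {k m : ℕ}
    (g : (Fin k → Fin m) → β) :
    ∑ p ∈ univ.filter Function.Injective, g p =
      ∑ f ∈ univ.filter StrictMono, ∑ σ : Perm (Fin k), g (f ∘ σ) := by
  rw [← sum_product']
  refine sum_nbij' (fun p => (p ∘ Tuple.sort p, (Tuple.sort p)⁻¹)) (fun q => q.1 ∘ q.2)
    ?_ ?_ ?_ ?_ ?_
  · intro p hp
    simp only [mem_filter, mem_product, mem_univ, true_and, and_true] at hp ⊢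
    exact (Tuple.monotone_sort p).strictMono_of_injective (hp.comp (Tuple.sort p).injective)
  · intro q hq
    simp only [mem_filter, mem_product, mem_univ, true_and, and_true] at hq ⊢
    exact hq.injective.comp q.2.injective
  · intro p _
    ext i
    simp
  · rintro ⟨f, σ⟩ hf
    simp only [mem_filter, mem_product, mem_univ, true_and, and_true] at hf
    have hsorted : (f ∘ σ) ∘ Tuple.sort (f ∘ σ) = f := by
      rw [Tuple.comp_perm_comp_sort_eq_comp_sort,
        Tuple.sort_eq_refl_iff_monotone.mpr hf.monotone]
      rfl
    have hsort : Tuple.sort (f ∘ σ) = σ⁻¹ :=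
      Equiv.ext fun x => by simpa using congrArg (⇑σ⁻¹) (hf.injective (congrFun hsorted x))
    rw [hsorted, hsort, inv_inv]
  · intro p _
    congr 1
    ext i
    simp

namespace Matrix

variable {α : Type*} [CommRing α] {k m : ℕ}

theorem det_mul_eq_sum_prod_mul_det_submatrix (A : Matrix (Fin k) (Fin m) α)
    (B : Matrix (Fin m) (Fin k) α) :
    (A * B).det = ∑ p : Fin k → Fin m, (∏ i, B (p i) i) * (A.submatrix id p).det := by
  calc (A * B).det = ∑ σ : Perm (Fin k), Perm.sign σ • ∏ i, ∑ j, A (σ i) j * B j i := by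
        simp only [det_apply, mul_apply]
    _ = ∑ p : Fin k → Fin m, ∑ σ : Perm (Fin k),
          Perm.sign σ • ∏ i, A (σ i) (p i) * B (p i) i := by
        simp only [prod_univ_sum, Fintype.piFinset_univ, smul_sum]
        exact sum_comm
    _ = _ := by
        refine sum_congr rfl fun p _ => ?_
        simp only [det_apply', mul_sum, prod_mul_distrib, submatrix_apply, id_eq, Units.smul_def,
          zsmul_eq_mul]
        exact sum_congr rfl fun σ _ => by ring

theorem sum_perm_prod_mul_det_submatrix_comp (A : Matrix (Fin k) (Fin m) α)
    (B : Matrix (Fin m) (Fin k) α) (f : Fin k → Fin m) :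
    ∑ σ : Perm (Fin k), (∏ i, B ((f ∘ σ) i) i) * (A.submatrix id (f ∘ σ)).det =
      (A.submatrix id f).det * (B.submatrix f id).det := by
  have hperm (σ : Perm (Fin k)) : A.submatrix id (f ∘ σ) = (A.submatrix id f).submatrix id σ :=
    rfl
  simp only [hperm, det_permute', det_apply' (B.submatrix f id), mul_sum, submatrix_apply, id_eq,
    Function.comp_apply]
  exact sum_congr rfl fun σ _ => by ring

theorem det_mul_eq_sum_strictMono (A : Matrix (Fin k) (Fin m) α) (B : Matrix (Fin m) (Fin k) α) :
    (A * B).det =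
      ∑ f ∈ univ.filter StrictMono, (A.submatrix id f).det * (B.submatrix f id).det := by
  have hinj : ∑ p ∈ univ.filter Function.Injective, (∏ i, B (p i) i) * (A.submatrix id p).det =
      ∑ p : Fin k → Fin m, (∏ i, B (p i) i) * (A.submatrix id p).det := by
    refine sum_subset (subset_univ _) fun p _ hp => ?_
    obtain ⟨i, j, hij, hne⟩ := Function.not_injective_iff.mp (by simpa using hp)
    rw [det_zero_of_column_eq hne fun r => by simp [hij], mul_zero]
  rw [det_mul_eq_sum_prod_mul_det_submatrix, ← hinj, sum_injective_eq_sum_strictMono_sum_perm]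
  exact sum_congr rfl fun f _ => sum_perm_prod_mul_det_submatrix_comp A B f

end Matrix

open Matrix

theorem isTP_zero : IsTP fun _ _ => 0 := by
  rintro (_ | k) rows cols - -
  · simp
  · exact (det_eq_zero_of_row_eq_zero 0 fun _ => rfl).ge

theorem IsTP.comp_monotone {M : ℕ → ℕ → ℝ} (hM : IsTP M) {r c : ℕ → ℕ} (hr : Monotone r)
    (hc : Monotone c) : IsTP fun i j => M (r i) (c j) := by
  intro k rows cols hrows hcols
  by_cases hrinj : Function.Injective (r ∘ rows)
  · by_cases hcinj : Function.Injective (c ∘ cols)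
    · exact hM k _ _ ((hr.comp hrows.monotone).strictMono_of_injective hrinj)
        ((hc.comp hcols.monotone).strictMono_of_injective hcinj)
    · obtain ⟨i, j, hij, hne⟩ := Function.not_injective_iff.mp hcinj
      exact (det_zero_of_column_eq hne fun l => by simp_all).ge
  · obtain ⟨i, j, hij, hne⟩ := Function.not_injective_iff.mp hrinj
    exact (det_zero_of_row_eq hne (funext fun l => by simp_all)).ge

theorem IsTP.sum_mul {A B : ℕ → ℕ → ℝ} (hA : IsTP A) (hB : IsTP B) (m : ℕ) :
    IsTP fun i l => ∑ t ∈ range m, A i t * B t l := by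
  intro k rows cols hrows hcols
  have hprod : (of fun i l => ∑ t ∈ range m, A (rows i) t * B t (cols l)) =
      (of fun i (t : Fin m) => A (rows i) t) * of fun (t : Fin m) l => B t (cols l) := by
    ext i l
    simp [mul_apply, Fin.sum_univ_eq_sum_range (fun t => A (rows i) t * B t (cols l))]
  rw [hprod, det_mul_eq_sum_strictMono]
  refine sum_nonneg fun f hf => mul_nonneg ?_ ?_
  · exact hA k rows _ hrows (Fin.val_strictMono.comp (mem_filter.mp hf).2)
  · exact hB k _ cols (Fin.val_strictMono.comp (mem_filter.mp hf).2) hcols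

theorem IsTP.of_firstRow {M : ℕ → ℕ → ℝ} (h00 : 0 ≤ M 0 0) (h0 : ∀ j, M 0 (j + 1) = 0)
    (hM : IsTP fun i j => M (i + 1) j) : IsTP M := by
  have hlower {k : ℕ} {rows cols : Fin k → ℕ} (hrows : StrictMono rows) (hcols : StrictMono cols)
      (hpos : ∀ i, 1 ≤ rows i) : 0 ≤ (of fun i j => M (rows i) (cols j)).det := by
    have := hM k (fun i => rows i - 1) cols
      (fun i j hij => show rows i - 1 < rows j - 1 by have := hrows hij; have := hpos i; omega)
      hcols
    simpa [Nat.sub_add_cancel, hpos] using this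
  rintro (_ | k) rows cols hrows hcols
  · simp
  by_cases hrow : rows 0 = 0
  · by_cases hcol : cols 0 = 0
    · have hexpand : (of fun i j => M (rows i) (cols j)).det =
          M 0 0 * (of fun i j : Fin k => M (rows i.succ) (cols j.succ)).det := by
        rw [det_succ_row_zero, Fin.sum_univ_succ, sum_eq_zero]
        · simp only [Fin.succAbove_zero, Fin.val_zero, pow_zero, one_mul, of_apply, hrow, hcol,
            add_zero]
          rfl
        · intro j _
          obtain ⟨c, hc⟩ : ∃ c, cols j.succ = c + 1 :=
            ⟨cols j.succ - 1, by have := hcols (Fin.succ_pos j); omega⟩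
          simp [hrow, hc, h0]
      rw [hexpand]
      refine mul_nonneg h00 (hlower (hrows.comp Fin.strictMono_succ)
        (hcols.comp Fin.strictMono_succ) fun i => ?_)
      have := hrows (Fin.succ_pos i)
      omega
    · refine (det_eq_zero_of_row_eq_zero 0 fun j => ?_).ge
      obtain ⟨c, hc⟩ : ∃ c, cols j = c + 1 :=
        ⟨cols j - 1, by have := hcols.monotone (Fin.zero_le j); omega⟩
      simp [hrow, hc, h0]
  · exact hlower hrows hcols fun i => by have := hrows.monotone (Fin.zero_le i); omega

def rowTrunc (M : ℕ → ℕ → ℝ) (N : ℕ) : ℕ → ℕ → ℝ := fun i j => if i < N then M i j else 0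

theorem isTP_of_forall_isTP_rowTrunc {M : ℕ → ℕ → ℝ} (h : ∀ N, IsTP (rowTrunc M N)) : IsTP M := by
  intro k rows cols hrows hcols
  have hlt (i : Fin k) : rows i < univ.sup rows + 1 := Nat.lt_succ_of_le (le_sup (mem_univ i))
  simpa [rowTrunc, hlt] using h (univ.sup rows + 1) k rows cols hrows hcols

theorem isTP_of_production {M P : ℕ → ℕ → ℝ} (h00 : 0 ≤ M 0 0) (htri : ∀ n k, n < k → M n k = 0)
    (hP : IsTP P) (hrec : ∀ n k, M (n + 1) k = ∑ j ∈ range (n + 1), M n j * P j k) :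
    IsTP M := by
  refine isTP_of_forall_isTP_rowTrunc fun N => ?_
  induction N with
  | zero =>
    convert isTP_zero
    simp [rowTrunc]
  | succ N ih =>
    have hshift : (fun i k => rowTrunc M (N + 1) (i + 1) k) =
        fun i k => ∑ j ∈ range N, rowTrunc M N i j * P j k := by
      ext i k
      by_cases hi : i < N
      · simp only [rowTrunc, hi, if_true, add_lt_add_iff_right, hrec]
        refine sum_subset (range_subset_range.mpr hi) fun j _ hj => ?_
        rw [htri i j (by simpa using hj), zero_mul]
      · simp [rowTrunc, hi]
    refine IsTP.of_firstRow (by simpa [rowTrunc] using h00)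
      (fun j => by simp [rowTrunc, htri 0 (j + 1)]) ?_
    rw [hshift]
    exact ih.sum_mul hP N

def consistentProduction (a : ℕ → ℝ) : ℕ → ℕ → ℝ := fun j k => toeplitz a (j + 1) (max k 1)

@[simp]
theorem consistentProduction_zero_right (a : ℕ → ℝ) (j : ℕ) : consistentProduction a j 0 = a j := by
  simp [consistentProduction, toeplitz]

@[simp]
theorem consistentProduction_succ_right (a : ℕ → ℝ) (j k : ℕ) :
    consistentProduction a j (k + 1) = if k ≤ j then a (j - k) else 0 := by
  simp [consistentProduction, toeplitz]

theorem IsPF.isTP_consistentProduction {a : ℕ → ℝ} (hPF : IsPF a) :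
    IsTP (consistentProduction a) :=
  IsTP.comp_monotone hPF (fun _ _ h => Nat.succ_le_succ h) fun _ _ h => max_le_max h le_rfl

theorem riordan_succ_eq_sum_mul_consistentProduction {a : ℕ → ℝ} {R : ℕ → ℕ → ℝ}
    (htri : ∀ n k, n < k → R n k = 0)
    (hZ : ∀ n, R (n + 1) 0 = ∑ j ∈ range (n + 1), a j * R n j)
    (hA : ∀ n k, R (n + 1) (k + 1) = ∑ j ∈ range (n + 1), a j * R n (k + j)) (n k : ℕ) :
    R (n + 1) k = ∑ j ∈ range (n + 1), R n j * consistentProduction a j k := by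
  rcases k with _ | k
  · simp only [hZ, consistentProduction_zero_right, mul_comm]
  have hextend : ∑ j ∈ range (n + 1), R n j * consistentProduction a j (k + 1) =
      ∑ j ∈ range (k + (n + 1)), R n j * consistentProduction a j (k + 1) := by
    refine sum_subset (range_subset_range.mpr (by omega)) fun j _ hj => ?_
    rw [htri n j (by simpa using hj), zero_mul]
  have hbelow : ∑ j ∈ range k, R n j * consistentProduction a j (k + 1) = 0 :=
    sum_eq_zero fun j hj => by simp [(mem_range.mp hj).not_ge]
  rw [hA, hextend, sum_range_add _ k (n + 1), hbelow, zero_add]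
  exact sum_congr rfl fun j _ => by simp [mul_comm]

theorem consistent_riordan_TP_of_PF_general (a z : ℕ → ℝ)
    (hcons : ∀ n, z n = a n)
    (R : ℕ → ℕ → ℝ)
    (hR00 : R 0 0 = 1)
    (htri : ∀ n k, n < k → R n k = 0)
    (hZ : ∀ n, R (n + 1) 0 = ∑ j ∈ Finset.range (n + 1), z j * R n j)
    (hA : ∀ n k, R (n + 1) (k + 1) = ∑ j ∈ Finset.range (n + 1), a j * R n (k + j))
    (hPF : IsPF a) :
    IsTP R := by
  have hZA (n : ℕ) : R (n + 1) 0 = ∑ j ∈ range (n + 1), a j * R n j := by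
    simp only [hZ, hcons]
  exact isTP_of_production (hR00 ▸ zero_le_one) htri hPF.isTP_consistentProduction
    (riordan_succ_eq_sum_mul_consistentProduction htri hZA hA)

theorem consistent_riordan_TP_of_PF (a z : ℕ → ℝ) (ha : ∀ n, 0 ≤ a n) (hz : ∀ n, 0 ≤ z n)
    (hcons : ∀ n, z n = a n)
    (R : ℕ → ℕ → ℝ)
    (hR00 : R 0 0 = 1)
    (htri : ∀ n k, n < k → R n k = 0)
    (hZ : ∀ n, R (n + 1) 0 = ∑ j ∈ Finset.range (n + 1), z j * R n j)
    (hA : ∀ n k, R (n + 1) (k + 1) = ∑ j ∈ Finset.range (n + 1), a j * R n (k + j))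
    (hPF : IsPF a) :
    IsTP R :=
  consistent_riordan_TP_of_PF_general a z hcons R hR00 htri hZ hA hPF
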